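/- Suppose the costs $W_{i,j,k} = a_{i,j} + b_{i,k} + c_{j,k}$ for $i,j,k \in [n]$ where all $a_{i,j}, b_{i,k}, c_{j,k}$ are independent uniform $[0,1]$ random variables, and let $Z_n = \min_{\sigma,\tau} \sum_{i=1}^n W_{i,\sigma(i),\tau(i)}$ over permutations $\sigma,\tau$ of $[n]$. Then $\mathbb{E}(Z_n) \ge c_1 n^{1/3}$ for some absolute constant $c_1 > 0$ and all sufficiently large $n$. -/

import Mathlib

/-!
For fixed permutations `(σ, τ)` the cost `∑ i, W i (σ i) (τ i)` is a sum of `3 n` distinct, hence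
independent, uniform variables, so Chernoff's bound gives `ℙ(cost ≤ t) ≤ (e t / 3 n) ^ (3 n)`.
A union bound over the `(n!)² ≤ n ^ (2 n)` pairs of permutations with `t = n ^ (1/3)` gives
`ℙ(Z_n < t) ≤ ((e / 3) ^ 3) ^ n ≤ 1 / 2` for `n ≥ 3`, and then `𝔼 Z_n ≥ t / 2` since `Z_n ≥ 0`.
-/

open MeasureTheory ProbabilityTheory Real

section Chernoff

variable {Ω : Type*} [MeasureSpace Ω] {Y : Ω → ℝ}

lemma ae_mem_Icc_of_map_eq_uniform (hY : Measurable Y)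
    (hmap : Measure.map Y ℙ = volume.restrict (Set.Icc (0:ℝ) 1)) :
    ∀ᵐ ω, Y ω ∈ Set.Icc (0:ℝ) 1 :=
  ae_of_ae_map hY.aemeasurable (hmap ▸ ae_restrict_mem measurableSet_Icc)

lemma mgf_neg_le_inv_of_map_eq_uniform (hY : Measurable Y)
    (hmap : Measure.map Y ℙ = volume.restrict (Set.Icc (0:ℝ) 1)) {l : ℝ} (hl : 0 < l) :
    mgf Y ℙ (-l) ≤ l⁻¹ := by
  have hIcc_ae_Ioi : Set.Icc (0:ℝ) 1 ≤ᵐ[volume] Set.Ioi 0 :=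
    Ioc_ae_eq_Icc.symm.le.trans Set.Ioc_subset_Ioi_self.eventuallyLE
  calc mgf Y ℙ (-l) = ∫ x in Set.Icc (0:ℝ) 1, exp (-l * x) := by
        rw [mgf, ← hmap, integral_map hY.aemeasurable (by fun_prop)]
    _ ≤ ∫ x in Set.Ioi (0:ℝ), exp (-l * x) :=
        setIntegral_mono_set (exp_neg_integrableOn_Ioi 0 hl)
          (.of_forall fun x => (exp_pos _).le) hIcc_ae_Ioi
    _ = l⁻¹ := by
        simpa [neg_mul, integral_exp_Iic_zero] using
          integral_comp_mul_left_Ioi (fun u => exp (-u)) 0 hl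

variable [IsProbabilityMeasure (ℙ : Measure Ω)] {ι : Type*} [Fintype ι] {X : ι → Ω → ℝ}

lemma measureReal_sum_le_le_exp_mul_of_uniform (hX : ∀ i, Measurable (X i))
    (hindep : iIndepFun X ℙ)
    (hmap : ∀ i, Measure.map (X i) ℙ = volume.restrict (Set.Icc (0:ℝ) 1))
    (ε : ℝ) {l : ℝ} (hl : 0 < l) :
    (ℙ : Measure Ω).real {ω | ∑ i, X i ω ≤ ε} ≤ exp (l * ε) * l⁻¹ ^ Fintype.card ι := by
  have hsum_nonneg : ∀ᵐ ω, 0 ≤ (∑ i, X i) ω := by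
    filter_upwards [ae_all_iff.2 fun i => ae_mem_Icc_of_map_eq_uniform (hX i) (hmap i)] with ω hω
    simpa [Finset.sum_apply] using Finset.sum_nonneg fun i _ => (hω i).1
  have hint : Integrable (fun ω => exp (-l * (∑ i, X i) ω)) ℙ := by
    refine (integrable_const 1).mono' (by fun_prop) ?_
    filter_upwards [hsum_nonneg] with ω hω
    rw [norm_of_nonneg (exp_pos _).le, exp_le_one_iff]
    nlinarith
  calc (ℙ : Measure Ω).real {ω | ∑ i, X i ω ≤ ε}
      ≤ exp (- -l * ε) * mgf (∑ i, X i) ℙ (-l) := by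
        simpa [Finset.sum_apply] using measure_le_le_exp_mul_mgf ε (neg_nonpos.2 hl.le) hint
    _ = exp (l * ε) * ∏ i, mgf (X i) ℙ (-l) := by rw [neg_neg, hindep.mgf_sum hX]
    _ ≤ exp (l * ε) * l⁻¹ ^ Fintype.card ι := by
        rw [← Finset.card_univ, ← Finset.prod_const]
        exact mul_le_mul_of_nonneg_left (Finset.prod_le_prod (fun _ _ => mgf_nonneg)
          fun i _ => mgf_neg_le_inv_of_map_eq_uniform (hX i) (hmap i) hl) (exp_pos _).le

/-- Chernoff's bound with the optimal parameter `l = card ι / ε`. -/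
lemma measureReal_sum_le_le_pow_of_uniform [Nonempty ι] (hX : ∀ i, Measurable (X i))
    (hindep : iIndepFun X ℙ)
    (hmap : ∀ i, Measure.map (X i) ℙ = volume.restrict (Set.Icc (0:ℝ) 1))
    {ε : ℝ} (hε : 0 < ε) :
    (ℙ : Measure Ω).real {ω | ∑ i, X i ω ≤ ε} ≤
      (exp 1 * ε / Fintype.card ι) ^ Fintype.card ι := by
  set m := Fintype.card ι
  have hm : (0:ℝ) < m := by simp [m, Fintype.card_pos]
  calc (ℙ : Measure Ω).real {ω | ∑ i, X i ω ≤ ε}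
      ≤ exp (m / ε * ε) * (m / ε)⁻¹ ^ m :=
        measureReal_sum_le_le_exp_mul_of_uniform hX hindep hmap ε (by positivity)
    _ = (exp 1 * ε / m) ^ m := by
        rw [div_mul_cancel₀ _ hε.ne', ← mul_one (m : ℝ), exp_nat_mul, mul_one, inv_div,
          ← mul_pow, mul_div_assoc]

end Chernoff

lemma exp_one_div_three_pow_three_le : (exp 1 / 3) ^ 3 ≤ 3 / 4 := by
  calc (exp 1 / 3) ^ 3 ≤ (2.7182818286 / 3) ^ 3 := by
        gcongr; exact exp_one_lt_d9.le
    _ ≤ 3 / 4 := by norm_num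

lemma factorial_mul_factorial_mul_pow_le_half {n : ℕ} (hn : 3 ≤ n) :
    (n.factorial : ℝ) * n.factorial * (exp 1 * (n : ℝ) ^ (1 / 3 : ℝ) / (3 * n)) ^ (3 * n) ≤
      1 / 2 := by
  have hn0 : (0 : ℝ) < n := by positivity
  have hcube : ((n : ℝ) ^ (1 / 3 : ℝ)) ^ 3 = n := by
    rw [← rpow_natCast, ← rpow_mul hn0.le]; norm_num
  have hbase : (exp 1 * (n : ℝ) ^ (1 / 3 : ℝ) / (3 * n)) ^ 3 = (exp 1 / 3) ^ 3 / (n ^ 2) := by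
    rw [div_pow, mul_pow, mul_pow, hcube]; field_simp
  have hfact : (n.factorial : ℝ) ≤ (n : ℝ) ^ n := by exact_mod_cast n.factorial_le_pow
  calc (n.factorial : ℝ) * n.factorial * (exp 1 * (n : ℝ) ^ (1 / 3 : ℝ) / (3 * n)) ^ (3 * n)
      = (n.factorial : ℝ) * n.factorial / ((n : ℝ) ^ n * n ^ n) * ((exp 1 / 3) ^ 3) ^ n := by
        rw [pow_mul, hbase, div_pow]
        ring
    _ ≤ 1 * (3 / 4) ^ n := by
        gcongr
        · exact div_le_one_of_le₀ (mul_le_mul hfact hfact (by positivity) (by positivity))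
            (by positivity)
        · exact exp_one_div_three_pow_three_le
    _ ≤ (3 / 4) ^ 3 := by
        rw [one_mul]; exact pow_le_pow_of_le_one (by norm_num) (by norm_num) hn
    _ ≤ 1 / 2 := by norm_num

section Planar

variable {n : ℕ} {x : Fin 3 × Fin n × Fin n → ℝ}

/-- `x (0, i, j)`, `x (1, i, k)`, `x (2, j, k)` play the roles of `a i j`, `b i k`, `c j k`. -/
def planarCost (x : Fin 3 × Fin n × Fin n → ℝ)
    (στ : Equiv.Perm (Fin n) × Equiv.Perm (Fin n)) : ℝ :=
  ∑ i, (x (0, i, στ.1 i) + x (1, i, στ.2 i) + x (2, στ.1 i, στ.2 i))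

def planarCell (σ τ : Equiv.Perm (Fin n)) (q : Fin 3 × Fin n) : Fin 3 × Fin n × Fin n :=
  (q.1, ![(q.2, σ q.2), (q.2, τ q.2), (σ q.2, τ q.2)] q.1)

lemma planarCell_injective (σ τ : Equiv.Perm (Fin n)) :
    Function.Injective (planarCell σ τ) := by
  rintro ⟨k, i⟩ ⟨k', i'⟩ h
  simp only [planarCell, Prod.mk.injEq] at h
  obtain ⟨rfl, h⟩ := h
  fin_cases k <;> simp_all

lemma planarCost_eq_sum_planarCell (x : Fin 3 × Fin n × Fin n → ℝ)
    (σ τ : Equiv.Perm (Fin n)) :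
    planarCost x (σ, τ) = ∑ q, x (planarCell σ τ q) := by
  simp [planarCost, planarCell, Fintype.sum_prod_type_right, Fin.sum_univ_three]

lemma planarCost_nonneg (hx : ∀ p, 0 ≤ x p) (στ : Equiv.Perm (Fin n) × Equiv.Perm (Fin n)) :
    0 ≤ planarCost x στ :=
  Finset.sum_nonneg fun i _ => by
    linarith [hx (0, i, στ.1 i), hx (1, i, στ.2 i), hx (2, στ.1 i, στ.2 i)]

lemma planarCost_le (hx : ∀ p, x p ≤ 1) (στ : Equiv.Perm (Fin n) × Equiv.Perm (Fin n)) :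
    planarCost x στ ≤ 3 * n := by
  calc planarCost x στ ≤ ∑ _i : Fin n, (3 : ℝ) :=
        Finset.sum_le_sum fun i _ => by
          linarith [hx (0, i, στ.1 i), hx (1, i, στ.2 i), hx (2, στ.1 i, στ.2 i)]
    _ = 3 * n := by simp [mul_comm]

end Planar

section Expectation

variable {α : Type*} [MeasurableSpace α] {μ : Measure α}

lemma measureReal_ciInf_lt_le_sum [IsFiniteMeasure μ] {ι : Type*} [Fintype ι] [Nonempty ι]
    (f : ι → α → ℝ) (t : ℝ) :
    μ.real {x | ⨅ i, f i x < t} ≤ ∑ i, μ.real {x | f i x < t} := by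
  calc μ.real {x | ⨅ i, f i x < t} ≤ μ.real (⋃ i, {x | f i x < t}) :=
        measureReal_mono fun x hx => by
          obtain ⟨i, hi⟩ := exists_lt_of_ciInf_lt (show ⨅ i, f i x < t from hx)
          exact Set.mem_iUnion.2 ⟨i, hi⟩
    _ ≤ ∑ i, μ.real {x | f i x < t} := measureReal_iUnion_fintype_le _

lemma mul_one_sub_measureReal_lt_le_integral [IsProbabilityMeasure μ] {Z : α → ℝ}
    (hZ : 0 ≤ᵐ[μ] Z) (hint : Integrable Z μ) (t : ℝ) :
    t * (1 - μ.real {x | Z x < t}) ≤ ∫ x, Z x ∂μ := by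
  have hcompl : {x | Z x < t}ᶜ = {x | t ≤ Z x} := by ext; simp
  rw [← probReal_compl_eq_one_sub₀ (nullMeasurableSet_lt hint.aemeasurable aemeasurable_const),
    hcompl]
  exact mul_meas_ge_le_integral_of_nonneg hZ hint t

end Expectation

section PlanarChernoff

variable {Ω : Type*} [MeasureSpace Ω] [IsProbabilityMeasure (ℙ : Measure Ω)] {n : ℕ}
  {X : Fin 3 × Fin n × Fin n → Ω → ℝ}

lemma measureReal_planarCost_le [NeZero n] (hX : ∀ p, Measurable (X p)) (hindep : iIndepFun X ℙ)
    (hmap : ∀ p, Measure.map (X p) ℙ = volume.restrict (Set.Icc (0:ℝ) 1))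
    (στ : Equiv.Perm (Fin n) × Equiv.Perm (Fin n)) {ε : ℝ} (hε : 0 < ε) :
    (ℙ : Measure Ω).real {ω | planarCost (fun p => X p ω) στ ≤ ε} ≤
      (exp 1 * ε / (3 * n)) ^ (3 * n) := by
  obtain ⟨σ, τ⟩ := στ
  simp_rw [planarCost_eq_sum_planarCell]
  simpa using measureReal_sum_le_le_pow_of_uniform (fun q => hX (planarCell σ τ q))
    (hindep.precomp (planarCell_injective σ τ)) (fun q => hmap (planarCell σ τ q)) hε

end PlanarChernoff

theorem stmt_17 :
    ∃ c₁ : ℝ, 0 < c₁ ∧ ∃ N : ℕ, ∀ n : ℕ, N ≤ n → 1 ≤ n →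
      ∀ (Ω : Type) (_ : MeasureSpace Ω), IsProbabilityMeasure (ℙ : Measure Ω) →
      ∀ (X : (Fin 3 × Fin n × Fin n) → Ω → ℝ),
        (∀ i, Measurable (X i)) →
        iIndepFun X ℙ →
        (∀ i, Measure.map (X i) ℙ = volume.restrict (Set.Icc (0:ℝ) 1)) →
        c₁ * (n:ℝ) ^ ((1:ℝ)/3) ≤
          ∫ ω, (⨅ στ : Equiv.Perm (Fin n) × Equiv.Perm (Fin n),
            ∑ i : Fin n,
              (X (0, i, στ.1 i) ω + X (1, i, στ.2 i) ω +
                X (2, στ.1 i, στ.2 i) ω)) ∂ℙ := by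
  refine ⟨1 / 2, by norm_num, 3, fun n hn _ Ω _ _ X hX hindep hmap => ?_⟩
  have : NeZero n := ⟨by omega⟩
  set t : ℝ := (n : ℝ) ^ ((1:ℝ)/3)
  set Z : Ω → ℝ := fun ω => ⨅ στ, planarCost (fun p => X p ω) στ
  have hZ_mem : ∀ᵐ ω, Z ω ∈ Set.Icc (0 : ℝ) (3 * n) := by
    filter_upwards [ae_all_iff.2 fun p => ae_mem_Icc_of_map_eq_uniform (hX p) (hmap p)] with ω hω
    exact ⟨le_ciInf (planarCost_nonneg fun p => (hω p).1),
      (ciInf_le (Finite.bddBelow_range _) (1, 1)).trans (planarCost_le (fun p => (hω p).2) _)⟩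
  have hZ_int : Integrable Z ℙ := by
    refine (integrable_const (3 * n : ℝ)).mono' ?_ ?_
    · exact (Measurable.iInf fun στ => by unfold planarCost; fun_prop).aestronglyMeasurable
    · filter_upwards [hZ_mem] with ω hω
      rw [norm_of_nonneg hω.1]; exact hω.2
  have hZ_small : (ℙ : Measure Ω).real {ω | Z ω < t} ≤ 1 / 2 := calc
    _ ≤ ∑ στ : Equiv.Perm (Fin n) × Equiv.Perm (Fin n), (ℙ : Measure Ω).real
          {ω | planarCost (fun p => X p ω) στ ≤ t} :=
        (measureReal_ciInf_lt_le_sum _ t).trans (Finset.sum_le_sum fun _ _ =>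
          measureReal_mono (Set.ofPred_subset_ofPred.2 fun _ => le_of_lt))
    _ ≤ ∑ _στ : Equiv.Perm (Fin n) × Equiv.Perm (Fin n), (exp 1 * t / (3 * n)) ^ (3 * n) :=
        Finset.sum_le_sum fun στ _ =>
          measureReal_planarCost_le hX hindep hmap στ (by positivity)
    _ = n.factorial * n.factorial * (exp 1 * t / (3 * n)) ^ (3 * n) := by
        simp [Fintype.card_perm]
    _ ≤ 1 / 2 := factorial_mul_factorial_mul_pow_le_half hn
  calc 1 / 2 * t = t * (1 - 1 / 2) := by ring
    _ ≤ t * (1 - (ℙ : Measure Ω).real {ω | Z ω < t}) := by gcongr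
    _ ≤ ∫ ω, Z ω :=
        mul_one_sub_measureReal_lt_le_integral (hZ_mem.mono fun _ h => h.1) hZ_int t
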